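/- Let I(q,p) = Σᵢ ζᵢ(q) pᵢ²/hᵢ(q)² + Ξ(q) be a smooth function on phase space and H = Σᵢ pᵢ²/(2hᵢ²) + Φ(q) the Hamiltonian in orthogonal coordinates. Then the Poisson bracket {I,H} vanishes identically (for all p) if and only if, for all i,j: ∂ζᵢ/∂qʲ = (ζⱼ − ζᵢ) ∂ln(hᵢ⁻²)/∂qʲ and ∂Ξ/∂qʲ = 2ζⱼ ∂Φ/∂qʲ. -/

import Mathlib

/-- Partial derivative in the `j`-th coordinate direction. -/
noncomputable def pd {n : ℕ} (j : Fin n) (f : (Fin n → ℝ) → ℝ) (q : Fin n → ℝ) : ℝ :=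
  fderiv ℝ f q (Pi.single j 1)

/-- Poisson bracket of two phase-space functions `F(q,p)`, `G(q,p)`. -/
noncomputable def pb {n : ℕ} (F G : (Fin n → ℝ) → (Fin n → ℝ) → ℝ)
    (q p : Fin n → ℝ) : ℝ :=
  ∑ i, (pd i (fun q' => F q' p) q * pd i (fun p' => G q p') p
      - pd i (fun p' => F q p') p * pd i (fun q' => G q' p) q)

lemma pd_congr {n : ℕ} {f g : (Fin n → ℝ) → ℝ} (j : Fin n) (q : Fin n → ℝ)
    (hfg : ∀ x, f x = g x) : pd j f q = pd j g q := by
  have : f = g := funext hfg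
  rw [this]

lemma pd_add {n : ℕ} {f g : (Fin n → ℝ) → ℝ} (j : Fin n) (q : Fin n → ℝ)
    (hf : DifferentiableAt ℝ f q) (hg : DifferentiableAt ℝ g q) :
    pd j (fun x => f x + g x) q = pd j f q + pd j g q := by
  unfold pd; rw [fderiv_fun_add hf hg]; simp

lemma pd_sum {n m : ℕ} (j : Fin n) (f : Fin m → (Fin n → ℝ) → ℝ) (q : Fin n → ℝ)
    (hf : ∀ i, DifferentiableAt ℝ (f i) q) :
    pd j (fun x => ∑ i, f i x) q = ∑ i, pd j (f i) q := by
  unfold pd; rw [fderiv_fun_sum fun i _ => hf i]; simp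

lemma pd_mul {n : ℕ} {f g : (Fin n → ℝ) → ℝ} (j : Fin n) (q : Fin n → ℝ)
    (hf : DifferentiableAt ℝ f q) (hg : DifferentiableAt ℝ g q) :
    pd j (fun x => f x * g x) q = pd j f q * g q + f q * pd j g q := by
  unfold pd; rw [fderiv_fun_mul hf hg]; simp; ring

lemma pd_mul_const {n : ℕ} {f : (Fin n → ℝ) → ℝ} (j : Fin n) (q : Fin n → ℝ) (c : ℝ)
    (hf : DifferentiableAt ℝ f q) :
    pd j (fun x => f x * c) q = pd j f q * c := by
  unfold pd; rw [fderiv_mul_const hf]; simp [mul_comm]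

lemma pd_const_mul {n : ℕ} {f : (Fin n → ℝ) → ℝ} (j : Fin n) (q : Fin n → ℝ) (c : ℝ)
    (hf : DifferentiableAt ℝ f q) :
    pd j (fun x => c * f x) q = c * pd j f q := by
  unfold pd; rw [fderiv_const_mul hf]; simp [mul_comm]

lemma pd_const {n : ℕ} (j : Fin n) (q : Fin n → ℝ) (c : ℝ) :
    pd j (fun _ => c) q = 0 := by
  unfold pd; rw [fderiv_const_apply]; simp

lemma pd_proj_sq {n : ℕ} (j k : Fin n) (p : Fin n → ℝ) :
    pd j (fun p' => (p' k) ^ 2) p = if k = j then 2 * p k else 0 := by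
  have h1 : HasFDerivAt (fun p' : Fin n → ℝ => (p' k) ^ 2)
      (((2 : ℕ) * p k ^ (2 - 1)) • (ContinuousLinearMap.proj k :
        (Fin n → ℝ) →L[ℝ] ℝ)) p :=
    (hasDerivAt_pow 2 (p k)).comp_hasFDerivAt (h₂ := fun x : ℝ => x ^ 2) p
      ((ContinuousLinearMap.proj k :
          (Fin n → ℝ) →L[ℝ] ℝ).hasFDerivAt (x := p))
  unfold pd
  rw [h1.fderiv]
  simp [Pi.single_apply]

lemma pd_log {n : ℕ} {f : (Fin n → ℝ) → ℝ} (j : Fin n) (q : Fin n → ℝ)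
    (hf : DifferentiableAt ℝ f q) (h0 : f q ≠ 0) :
    pd j (fun x => Real.log (f x)) q = (f q)⁻¹ * pd j f q := by
  unfold pd; rw [(hf.hasFDerivAt.log h0).fderiv]; simp

lemma eval_single {n : ℕ} (a : Fin n → Fin n → ℝ) (b : Fin n → ℝ) (k : Fin n) (t : ℝ) :
    ∑ j, (Pi.single k t : Fin n → ℝ) j * ((∑ i, a i j * ((Pi.single k t : Fin n → ℝ) i) ^ 2) + b j)
      = t * (a k k * t ^ 2 + b k) := by
  simp only [Pi.single_apply]
  rw [Finset.sum_eq_single k]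
  · rw [Finset.sum_eq_single k]
    · simp
    · intro i _ hik; simp [hik]
    · simp
  · intro j _ hjk; simp [hjk]
  · simp

lemma eval_pair {n : ℕ} (a : Fin n → Fin n → ℝ) (b : Fin n → ℝ) (i j : Fin n)
    (hij : i ≠ j) (t : ℝ) :
    (∑ l, ((Pi.single j 1 : Fin n → ℝ) + (Pi.single i t : Fin n → ℝ)) l *
        ((∑ k, a k l * (((Pi.single j 1 : Fin n → ℝ) + (Pi.single i t : Fin n → ℝ)) k) ^ 2) + b l))
      = ((a j j * 1 + a i j * t ^ 2 + b j) * 1 + (a j i * 1 + a i i * t ^ 2 + b i) * t) := by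
  set p : Fin n → ℝ := (Pi.single j 1 : Fin n → ℝ) + (Pi.single i t : Fin n → ℝ) with hp
  have hps : ∀ k, (p k) ^ 2 = (if k = j then 1 else 0) + (if k = i then t ^ 2 else 0) := by
    intro k
    by_cases h1 : k = j <;> by_cases h2 : k = i
    · exact absurd (h2 ▸ h1) hij
    · simp [hp, Pi.single_apply, h1, h2, Ne.symm hij]
    · simp [hp, Pi.single_apply, h1, h2, hij]
    · simp [hp, Pi.single_apply, h1, h2]
  have hinner : ∀ l, (∑ k, a k l * (p k) ^ 2) = a j l * 1 + a i l * t ^ 2 := by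
    intro l
    simp only [hps, mul_add, mul_ite, mul_zero, mul_one]
    rw [Finset.sum_add_distrib, Finset.sum_ite_eq' Finset.univ j (fun k => a k l),
      Finset.sum_ite_eq' Finset.univ i (fun k => a k l * t ^ 2)]
    simp
  simp only [hinner]
  have hpl : ∀ l, p l = (if l = j then 1 else 0) + (if l = i then t else 0) := by
    intro l; simp [hp, Pi.single_apply]
  simp only [hpl, add_mul, ite_mul, zero_mul, one_mul]
  rw [Finset.sum_add_distrib]
  simp [Finset.sum_ite_eq']
  ring

lemma poly_aux {n : ℕ} (a : Fin n → Fin n → ℝ) (b : Fin n → ℝ)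
    (hz : ∀ p : Fin n → ℝ, (∑ j, p j * ((∑ i, a i j * (p i) ^ 2) + b j)) = 0) :
    ∀ i j, a i j = 0 ∧ b j = 0 := by
  have hdiag : ∀ k, a k k = 0 ∧ b k = 0 := by
    intro k
    have h1 := hz (Pi.single k 1)
    have h2 := hz (Pi.single k 2)
    rw [eval_single] at h1 h2
    constructor <;> nlinarith
  intro i j
  refine ⟨?_, (hdiag j).2⟩
  by_cases hij : i = j
  · exact hij ▸ (hdiag i).1
  · have h1 := hz ((Pi.single j 1 : Fin n → ℝ) + (Pi.single i 1 : Fin n → ℝ))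
    have h2 := hz ((Pi.single j 1 : Fin n → ℝ) + (Pi.single i (-1) : Fin n → ℝ))
    rw [eval_pair a b i j hij] at h1 h2
    have d1 := (hdiag i).1; have d2 := (hdiag j).1
    have d3 := (hdiag i).2; have d4 := (hdiag j).2
    nlinarith [h1, h2, d1, d2, d3, d4]

lemma comb {m : ℕ} (D G P : Fin m → ℝ) (g' ζ' Ξ' Φ' p' : ℝ) :
    ((∑ i, D i * P i) + Ξ') * (g' * p') - 2 * ζ' * g' * p' * ((∑ i, G i * (P i / 2)) + Φ')
      = p' * ((∑ i, g' * (D i - ζ' * G i) * P i) + g' * (Ξ' - 2 * ζ' * Φ')) := by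
  have h1 : (∑ i, g' * (D i - ζ' * G i) * P i)
      = g' * (∑ i, D i * P i) - 2 * ζ' * g' * (∑ i, G i * (P i / 2)) := by
    rw [Finset.mul_sum, Finset.mul_sum, ← Finset.sum_sub_distrib]
    exact Finset.sum_congr rfl fun i _ => by ring
  rw [h1]; ring

lemma hasFDerivAt_proj_sq {n : ℕ} (k : Fin n) (p : Fin n → ℝ) :
    HasFDerivAt (fun p' : Fin n → ℝ => (p' k) ^ 2)
      (((2 : ℕ) * p k ^ (2 - 1)) • (ContinuousLinearMap.proj k :
        (Fin n → ℝ) →L[ℝ] ℝ)) p :=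
  (hasDerivAt_pow 2 (p k)).comp_hasFDerivAt (h₂ := fun x : ℝ => x ^ 2) p
    ((ContinuousLinearMap.proj k : (Fin n → ℝ) →L[ℝ] ℝ).hasFDerivAt (x := p))

lemma pb_formula {n : ℕ}
    (h : Fin n → (Fin n → ℝ) → ℝ) (hpos : ∀ i q, 0 < h i q)
    (hsm : ∀ i, ContDiff ℝ (⊤ : ℕ∞) (h i))
    (ζ : Fin n → (Fin n → ℝ) → ℝ) (hζ : ∀ i, ContDiff ℝ (⊤ : ℕ∞) (ζ i))
    (Ξ Φ : (Fin n → ℝ) → ℝ) (hΞ : ContDiff ℝ (⊤ : ℕ∞) Ξ) (hΦ : ContDiff ℝ (⊤ : ℕ∞) Φ)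
    (I H : (Fin n → ℝ) → (Fin n → ℝ) → ℝ)
    (hI : ∀ q p, I q p = (∑ i, ζ i q * (p i) ^ 2 / (h i q) ^ 2) + Ξ q)
    (hH : ∀ q p, H q p = (∑ i, (p i) ^ 2 / (2 * (h i q) ^ 2)) + Φ q)
    (q p : Fin n → ℝ) :
    pb I H q p = ∑ j, p j *
      ((∑ i, ((h j q) ^ 2)⁻¹ *
          (pd j (fun q' => ζ i q' * ((h i q') ^ 2)⁻¹) q
            - ζ j q * pd j (fun q' => ((h i q') ^ 2)⁻¹) q) * (p i) ^ 2)
        + ((h j q) ^ 2)⁻¹ * (pd j Ξ q - 2 * ζ j q * pd j Φ q)) := by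
  have dh : ∀ i x, DifferentiableAt ℝ (h i) x :=
    fun i x => ((hsm i).differentiable (by simp)) x
  have dg : ∀ i x, DifferentiableAt ℝ (fun q' => ((h i q') ^ 2)⁻¹) x :=
    fun i x => ((dh i x).pow 2).inv (pow_ne_zero 2 (hpos i x).ne')
  have dζ : ∀ i x, DifferentiableAt ℝ (ζ i) x :=
    fun i x => ((hζ i).differentiable (by simp)) x
  have dΞ : ∀ x, DifferentiableAt ℝ Ξ x := fun x => (hΞ.differentiable (by simp)) x
  have dΦ : ∀ x, DifferentiableAt ℝ Φ x := fun x => (hΦ.differentiable (by simp)) x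
  have dζg : ∀ i x, DifferentiableAt ℝ (fun q' => ζ i q' * ((h i q') ^ 2)⁻¹) x :=
    fun i x => (dζ i x).mul (dg i x)
  have dsq : ∀ (i : Fin n) (x : Fin n → ℝ),
      DifferentiableAt ℝ (fun p' : Fin n → ℝ => (p' i) ^ 2) x :=
    fun i x => (hasFDerivAt_proj_sq i x).differentiableAt
  have hI' : ∀ a b : Fin n → ℝ,
      I a b = (∑ i, (ζ i a * ((h i a) ^ 2)⁻¹) * (b i) ^ 2) + Ξ a := by
    intro a b
    rw [hI]
    congr 1
    exact Finset.sum_congr rfl fun i _ => by rw [div_eq_mul_inv]; ring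
  have hH' : ∀ a b : Fin n → ℝ,
      H a b = (∑ i, (((h i a) ^ 2)⁻¹ / 2) * (b i) ^ 2) + Φ a := by
    intro a b
    rw [hH]
    congr 1
    exact Finset.sum_congr rfl fun i _ => by
      rw [div_eq_mul_inv, mul_inv, div_eq_mul_inv]
      ring
  have e1 : ∀ j, pd j (fun q' => I q' p) q
      = (∑ i, pd j (fun q' => ζ i q' * ((h i q') ^ 2)⁻¹) q * (p i) ^ 2) + pd j Ξ q := by
    intro j
    rw [pd_congr j q (fun x => hI' x p)]
    rw [pd_add j q (DifferentiableAt.fun_sum fun i _ => (dζg i q).mul_const _) (dΞ q)]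
    rw [pd_sum j _ q fun i => (dζg i q).mul_const _]
    congr 1
    exact Finset.sum_congr rfl fun i _ => pd_mul_const j q _ (dζg i q)
  have e2 : ∀ j, pd j (fun p' => I q p') p
      = 2 * ζ j q * ((h j q) ^ 2)⁻¹ * p j := by
    intro j
    rw [pd_congr j p (fun x => hI' q x)]
    rw [pd_add j p (DifferentiableAt.fun_sum fun i _ => (dsq i p).const_mul _)
      (differentiableAt_const _)]
    rw [pd_sum j _ p fun i => (dsq i p).const_mul _, pd_const]
    rw [Finset.sum_congr rfl fun i _ => pd_const_mul j p _ (dsq i p)]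
    simp only [pd_proj_sq, mul_ite, mul_zero]
    rw [Finset.sum_ite_eq' Finset.univ j (fun i => ζ i q * ((h i q) ^ 2)⁻¹ * (2 * p i))]
    simp; ring
  have e3 : ∀ j, pd j (fun q' => H q' p) q
      = (∑ i, pd j (fun q' => ((h i q') ^ 2)⁻¹) q * ((p i) ^ 2 / 2)) + pd j Φ q := by
    intro j
    have hH'' : ∀ x : Fin n → ℝ,
        H x p = (∑ i, ((h i x) ^ 2)⁻¹ * ((p i) ^ 2 / 2)) + Φ x := by
      intro x
      rw [hH' x p]
      congr 1
      exact Finset.sum_congr rfl fun i _ => by ring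
    rw [pd_congr j q hH'']
    rw [pd_add j q (DifferentiableAt.fun_sum fun i _ => (dg i q).mul_const _) (dΦ q)]
    rw [pd_sum j _ q fun i => (dg i q).mul_const _]
    congr 1
    exact Finset.sum_congr rfl fun i _ => pd_mul_const j q _ (dg i q)
  have e4 : ∀ j, pd j (fun p' => H q p') p = ((h j q) ^ 2)⁻¹ * p j := by
    intro j
    rw [pd_congr j p (fun x => hH' q x)]
    rw [pd_add j p (DifferentiableAt.fun_sum fun i _ => (dsq i p).const_mul _)
      (differentiableAt_const _)]
    rw [pd_sum j _ p fun i => (dsq i p).const_mul _, pd_const]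
    rw [Finset.sum_congr rfl fun i _ => pd_const_mul j p _ (dsq i p)]
    simp only [pd_proj_sq, mul_ite, mul_zero]
    rw [Finset.sum_ite_eq' Finset.univ j (fun i => ((h i q) ^ 2)⁻¹ / 2 * (2 * p i))]
    simp; ring
  unfold pb
  simp only [e1, e2, e3, e4]
  exact Finset.sum_congr rfl fun j _ => comb _ _ _ _ _ _ _ _

/-- For `I = Σᵢ ζᵢ(q) pᵢ²/hᵢ² + Ξ(q)` and
`H = Σᵢ pᵢ²/(2hᵢ²) + Φ(q)`, the bracket `{I,H}` vanishes identically iff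
`∂ζᵢ/∂qʲ = (ζⱼ − ζᵢ) ∂ln(hᵢ⁻²)/∂qʲ` and `∂Ξ/∂qʲ = 2ζⱼ ∂Φ/∂qʲ` for all `i, j`. -/
theorem quadratic_integral_iff_relations {n : ℕ}
    (h : Fin n → (Fin n → ℝ) → ℝ) (hpos : ∀ i q, 0 < h i q)
    (hsm : ∀ i, ContDiff ℝ (⊤ : ℕ∞) (h i))
    (ζ : Fin n → (Fin n → ℝ) → ℝ) (hζ : ∀ i, ContDiff ℝ (⊤ : ℕ∞) (ζ i))
    (Ξ Φ : (Fin n → ℝ) → ℝ) (hΞ : ContDiff ℝ (⊤ : ℕ∞) Ξ) (hΦ : ContDiff ℝ (⊤ : ℕ∞) Φ)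
    (I H : (Fin n → ℝ) → (Fin n → ℝ) → ℝ)
    (hI : ∀ q p, I q p = (∑ i, ζ i q * (p i) ^ 2 / (h i q) ^ 2) + Ξ q)
    (hH : ∀ q p, H q p = (∑ i, (p i) ^ 2 / (2 * (h i q) ^ 2)) + Φ q) :
    (∀ q p : Fin n → ℝ, pb I H q p = 0) ↔
      (∀ (i j : Fin n) (q : Fin n → ℝ),
        pd j (ζ i) q
            = (ζ j q - ζ i q) * pd j (fun q' => Real.log (((h i q') ^ 2)⁻¹)) q
          ∧ pd j Ξ q = 2 * ζ j q * pd j Φ q) := by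
  have dh : ∀ i x, DifferentiableAt ℝ (h i) x :=
    fun i x => ((hsm i).differentiable (by simp)) x
  have dg : ∀ i x, DifferentiableAt ℝ (fun q' => ((h i q') ^ 2)⁻¹) x :=
    fun i x => ((dh i x).pow 2).inv (pow_ne_zero 2 (hpos i x).ne')
  have dζ : ∀ i x, DifferentiableAt ℝ (ζ i) x :=
    fun i x => ((hζ i).differentiable (by simp)) x
  have hne : ∀ (i : Fin n) (x : Fin n → ℝ), ((h i x) ^ 2)⁻¹ ≠ 0 :=
    fun i x => inv_ne_zero (pow_ne_zero 2 (hpos i x).ne')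
  constructor
  · intro hpb i j q
    obtain ⟨ha, hb⟩ := poly_aux
      (fun i j => ((h j q) ^ 2)⁻¹ * (pd j (fun q' => ζ i q' * ((h i q') ^ 2)⁻¹) q
          - ζ j q * pd j (fun q' => ((h i q') ^ 2)⁻¹) q))
      (fun j => ((h j q) ^ 2)⁻¹ * (pd j Ξ q - 2 * ζ j q * pd j Φ q))
      (fun p => by
        rw [← pb_formula h hpos hsm ζ hζ Ξ Φ hΞ hΦ I H hI hH q p]
        exact hpb q p) i j
    constructor
    · have h0 : pd j (fun q' => ζ i q' * ((h i q') ^ 2)⁻¹) q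
          - ζ j q * pd j (fun q' => ((h i q') ^ 2)⁻¹) q = 0 :=
        (mul_eq_zero.mp ha).resolve_left (hne j q)
      rw [pd_mul j q (dζ i q) (dg i q)] at h0
      rw [pd_log j q (dg i q) (hne i q), inv_inv]
      have hh : (h i q) ^ 2 ≠ 0 := pow_ne_zero 2 (hpos i q).ne'
      have hg : (h i q ^ 2)⁻¹ * h i q ^ 2 = 1 := inv_mul_cancel₀ hh
      linear_combination (h i q ^ 2) * h0 - pd j (ζ i) q * hg
    · have h0 : pd j Ξ q - 2 * ζ j q * pd j Φ q = 0 :=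
        (mul_eq_zero.mp hb).resolve_left (hne j q)
      linarith [h0]
  · intro hrel q p
    rw [pb_formula h hpos hsm ζ hζ Ξ Φ hΞ hΦ I H hI hH q p]
    refine Finset.sum_eq_zero fun j _ => ?_
    have hb0 : pd j Ξ q - 2 * ζ j q * pd j Φ q = 0 := by
      have := (hrel j j q).2; linarith
    have ha0 : ∀ i, pd j (fun q' => ζ i q' * ((h i q') ^ 2)⁻¹) q
        - ζ j q * pd j (fun q' => ((h i q') ^ 2)⁻¹) q = 0 := by
      intro i
      have h1 := (hrel i j q).1
      rw [pd_log j q (dg i q) (hne i q), inv_inv] at h1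
      rw [pd_mul j q (dζ i q) (dg i q), h1]
      have hh : (h i q) ^ 2 ≠ 0 := pow_ne_zero 2 (hpos i q).ne'
      have hg : (h i q ^ 2)⁻¹ * h i q ^ 2 = 1 := inv_mul_cancel₀ hh
      linear_combination ((ζ j q - ζ i q) * pd j (fun q' => ((h i q') ^ 2)⁻¹) q) * hg
    simp only [ha0, hb0, mul_zero, zero_mul, Finset.sum_const_zero, add_zero, zero_add]
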